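/- arXiv:math/0612649 — 4 statements merged into one kernel-verified Lean document; each statement's English description precedes it below -/
import Mathlib

section
/- The function a(ς) = (δ - r + ς²/2 - sqrt((δ - r + ς²/2)² + 2rς²))/ς² is strictly increasing on (0,∞). -/
lemma pos_aux (v c : ℝ) (hc : 0 < c) : 0 < v + Real.sqrt (v ^ 2 + c) := by
  have hS : (Real.sqrt (v ^ 2 + c)) ^ 2 = v ^ 2 + c := Real.sq_sqrt (by positivity)
  have hS0 : 0 ≤ Real.sqrt (v ^ 2 + c) := Real.sqrt_nonneg _
  by_contra hcon
  push_neg at hcon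
  have h1 : 0 ≤ Real.sqrt (v ^ 2 + c) - v := by linarith
  have h2 : (v + Real.sqrt (v ^ 2 + c)) * (Real.sqrt (v ^ 2 + c) - v) ≤ 0 :=
    mul_nonpos_of_nonpos_of_nonneg hcon h1
  nlinarith [hS]

-- v ↦ v + sqrt (v^2 + c) is strictly increasing for c > 0
lemma aux_mono (c : ℝ) (hc : 0 < c) {v₁ v₂ : ℝ} (h : v₁ < v₂) :
    v₁ + Real.sqrt (v₁ ^ 2 + c) < v₂ + Real.sqrt (v₂ ^ 2 + c) := by
  set A := Real.sqrt (v₁ ^ 2 + c) with hAdef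
  set B := Real.sqrt (v₂ ^ 2 + c) with hBdef
  have hA : A ^ 2 = v₁ ^ 2 + c := Real.sq_sqrt (by positivity)
  have hB : B ^ 2 = v₂ ^ 2 + c := Real.sq_sqrt (by positivity)
  have hP1 : 0 < v₁ + A := pos_aux v₁ c hc
  have hP2 : 0 < v₂ + B := pos_aux v₂ c hc
  by_contra hcon
  push_neg at hcon
  have hc1 : A - v₁ = c / (v₁ + A) := by
    rw [eq_div_iff (ne_of_gt hP1)]; nlinarith [hA]
  have hc2 : B - v₂ = c / (v₂ + B) := by
    rw [eq_div_iff (ne_of_gt hP2)]; nlinarith [hB]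
  have hd : c / (v₁ + A) ≤ c / (v₂ + B) :=
    div_le_div_of_nonneg_left (le_of_lt hc) hP2 hcon
  linarith [hc1, hc2, hd]

lemma key_eq (r δ : ℝ) (hr : 0 < r) (x : ℝ) (hx : 0 < x) :
    (δ - r + x ^ 2 / 2 - Real.sqrt ((δ - r + x ^ 2 / 2) ^ 2 + 2 * r * x ^ 2)) / x ^ 2
      = -(2 * r) / (δ - r + x ^ 2 / 2 + Real.sqrt ((δ - r + x ^ 2 / 2) ^ 2 + 2 * r * x ^ 2)) := by
  set u := δ - r + x ^ 2 / 2 with hu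
  have hS : (Real.sqrt (u ^ 2 + 2 * r * x ^ 2)) ^ 2 = u ^ 2 + 2 * r * x ^ 2 :=
    Real.sq_sqrt (by positivity)
  have hd : 0 < u + Real.sqrt (u ^ 2 + 2 * r * x ^ 2) := pos_aux u _ (by positivity)
  rw [div_eq_div_iff (by positivity) (ne_of_gt hd)]
  nlinarith [hS]

theorem a_strictMono (r δ : ℝ) (hr : 0 < r) (hδ : 0 ≤ δ) :
    StrictMonoOn
      (fun ς : ℝ =>
        (δ - r + ς ^ 2 / 2 - Real.sqrt ((δ - r + ς ^ 2 / 2) ^ 2 + 2 * r * ς ^ 2)) / ς ^ 2)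
      (Set.Ioi 0) := by
  intro x hx y hy hxy
  simp only [Set.mem_Ioi] at hx hy
  dsimp only
  rw [key_eq r δ hr x hx, key_eq r δ hr y hy]
  have hdx : 0 < δ - r + x ^ 2 / 2 + Real.sqrt ((δ - r + x ^ 2 / 2) ^ 2 + 2 * r * x ^ 2) :=
    pos_aux _ _ (by positivity)
  have hlt : δ - r + x ^ 2 / 2 + Real.sqrt ((δ - r + x ^ 2 / 2) ^ 2 + 2 * r * x ^ 2)
      < δ - r + y ^ 2 / 2 + Real.sqrt ((δ - r + y ^ 2 / 2) ^ 2 + 2 * r * y ^ 2) := by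
    have h1 : δ - r + x ^ 2 / 2 < δ - r + y ^ 2 / 2 := by nlinarith
    calc δ - r + x ^ 2 / 2 + Real.sqrt ((δ - r + x ^ 2 / 2) ^ 2 + 2 * r * x ^ 2)
        < δ - r + y ^ 2 / 2 + Real.sqrt ((δ - r + y ^ 2 / 2) ^ 2 + 2 * r * x ^ 2) :=
          aux_mono (2 * r * x ^ 2) (by positivity) h1
      _ ≤ δ - r + y ^ 2 / 2 + Real.sqrt ((δ - r + y ^ 2 / 2) ^ 2 + 2 * r * y ^ 2) := by
          gcongr
  rw [neg_div, neg_div, neg_lt_neg_iff]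
  exact div_lt_div_of_pos_left (by positivity) hdx hlt
end

section
/- If δ > r, then as ς → 0⁺, a(ς) = (δ - r + ς²/2 - sqrt((δ - r + ς²/2)² + 2rς²))/ς² tends to -r/(δ - r); if δ ≤ r, then a(ς) tends to -∞ as ς → 0⁺. -/
open Filter Real Set

lemma aux_pos (r δ : ℝ) (hr : 0 < r) {ς : ℝ} (hς : 0 < ς) :
    0 < (δ - r + ς ^ 2 / 2) + Real.sqrt ((δ - r + ς ^ 2 / 2) ^ 2 + 2 * r * ς ^ 2) := by
  set b := δ - r + ς ^ 2 / 2
  have hς2 : 0 < ς ^ 2 := pow_pos hς 2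
  have hb2 : b ^ 2 < b ^ 2 + 2 * r * ς ^ 2 := by nlinarith
  have habs : |b| < Real.sqrt (b ^ 2 + 2 * r * ς ^ 2) := by
    rw [Real.lt_sqrt (abs_nonneg b), sq_abs]; exact hb2
  linarith [(abs_lt.mp habs).1]

lemma aux_eq (r δ : ℝ) (hr : 0 < r) {ς : ℝ} (hς : 0 < ς) :
    (δ - r + ς ^ 2 / 2 - Real.sqrt ((δ - r + ς ^ 2 / 2) ^ 2 + 2 * r * ς ^ 2)) / ς ^ 2
      = -(2 * r) / ((δ - r + ς ^ 2 / 2) + Real.sqrt ((δ - r + ς ^ 2 / 2) ^ 2 + 2 * r * ς ^ 2)) := by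
  have hD : 0 ≤ (δ - r + ς ^ 2 / 2) ^ 2 + 2 * r * ς ^ 2 := by positivity
  have hsq : Real.sqrt ((δ - r + ς ^ 2 / 2) ^ 2 + 2 * r * ς ^ 2) ^ 2
      = (δ - r + ς ^ 2 / 2) ^ 2 + 2 * r * ς ^ 2 := Real.sq_sqrt hD
  have hpos := aux_pos r δ hr hς
  have hς2 : (ς : ℝ) ^ 2 ≠ 0 := by positivity
  rw [div_eq_div_iff hς2 (ne_of_gt hpos)]
  linear_combination -hsq

lemma aux_cont (r δ : ℝ) :
    Filter.Tendsto
      (fun ς : ℝ => (δ - r + ς ^ 2 / 2) + Real.sqrt ((δ - r + ς ^ 2 / 2) ^ 2 + 2 * r * ς ^ 2))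
      (nhdsWithin 0 (Set.Ioi 0)) (nhds ((δ - r) + |δ - r|)) := by
  have hc : Continuous (fun ς : ℝ =>
      (δ - r + ς ^ 2 / 2) + Real.sqrt ((δ - r + ς ^ 2 / 2) ^ 2 + 2 * r * ς ^ 2)) := by
    continuity
  have := (hc.tendsto 0).mono_left (nhdsWithin_le_nhds (s := Set.Ioi 0))
  norm_num [Real.sqrt_sq_eq_abs] at this
  convert this using 2

theorem a_limit_zero (r δ : ℝ) (hr : 0 < r) (hδ : 0 ≤ δ) :
    (δ > r →
      Filter.Tendsto
        (fun ς : ℝ =>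
          (δ - r + ς ^ 2 / 2 - Real.sqrt ((δ - r + ς ^ 2 / 2) ^ 2 + 2 * r * ς ^ 2)) / ς ^ 2)
        (nhdsWithin 0 (Set.Ioi 0)) (nhds (-r / (δ - r)))) ∧
    (δ ≤ r →
      Filter.Tendsto
        (fun ς : ℝ =>
          (δ - r + ς ^ 2 / 2 - Real.sqrt ((δ - r + ς ^ 2 / 2) ^ 2 + 2 * r * ς ^ 2)) / ς ^ 2)
        (nhdsWithin 0 (Set.Ioi 0)) Filter.atBot) := by
  have heq : ∀ᶠ ς in nhdsWithin (0:ℝ) (Set.Ioi 0),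
      (δ - r + ς ^ 2 / 2 - Real.sqrt ((δ - r + ς ^ 2 / 2) ^ 2 + 2 * r * ς ^ 2)) / ς ^ 2
        = -(2 * r) / ((δ - r + ς ^ 2 / 2) + Real.sqrt ((δ - r + ς ^ 2 / 2) ^ 2 + 2 * r * ς ^ 2)) := by
    filter_upwards [self_mem_nhdsWithin] with ς hς
    exact aux_eq r δ hr hς
  constructor
  · intro h
    have hne : δ - r ≠ 0 := by linarith
    have habs : |δ - r| = δ - r := abs_of_pos (by linarith)
    have hden : Filter.Tendsto
        (fun ς : ℝ => (δ - r + ς ^ 2 / 2) + Real.sqrt ((δ - r + ς ^ 2 / 2) ^ 2 + 2 * r * ς ^ 2))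
        (nhdsWithin 0 (Set.Ioi 0)) (nhds (2 * (δ - r))) := by
      have := aux_cont r δ
      rw [habs] at this
      convert this using 2; ring
    have h2 : (2 : ℝ) * (δ - r) ≠ 0 := by
      intro hc; apply hne; linarith
    have hlim : Filter.Tendsto
        (fun ς : ℝ => -(2 * r) / ((δ - r + ς ^ 2 / 2) + Real.sqrt ((δ - r + ς ^ 2 / 2) ^ 2 + 2 * r * ς ^ 2)))
        (nhdsWithin 0 (Set.Ioi 0)) (nhds (-(2 * r) / (2 * (δ - r)))) :=
      (tendsto_const_nhds).div hden h2
    have hval : -(2 * r) / (2 * (δ - r)) = -r / (δ - r) := by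
      rw [neg_div, neg_div, mul_div_mul_left _ _ (two_ne_zero)]
    rw [hval] at hlim
    exact hlim.congr' (heq.mono fun ς hh => hh.symm)
  · intro h
    have habs : |δ - r| = -(δ - r) := abs_of_nonpos (by linarith)
    have hden : Filter.Tendsto
        (fun ς : ℝ => (δ - r + ς ^ 2 / 2) + Real.sqrt ((δ - r + ς ^ 2 / 2) ^ 2 + 2 * r * ς ^ 2))
        (nhdsWithin 0 (Set.Ioi 0)) (nhdsWithin 0 (Set.Ioi 0)) := by
      rw [tendsto_nhdsWithin_iff]
      constructor
      · have := aux_cont r δ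
        rw [habs] at this
        simpa using this
      · filter_upwards [self_mem_nhdsWithin] with ς hς
        exact aux_pos r δ hr hς
    have hinv : Filter.Tendsto (fun x : ℝ => -(2 * r) / x) (nhdsWithin 0 (Set.Ioi 0))
        Filter.atBot := by
      have h1 : Filter.Tendsto (fun x : ℝ => x⁻¹) (nhdsWithin (0:ℝ) (Set.Ioi 0)) Filter.atTop :=
        tendsto_inv_nhdsGT_zero
      have h2 : Filter.Tendsto (fun x : ℝ => -(2 * r) * x⁻¹) (nhdsWithin (0:ℝ) (Set.Ioi 0))
          Filter.atBot := h1.const_mul_atTop_of_neg (by linarith)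
      simpa [div_eq_mul_inv] using h2
    exact ((hinv.comp hden).congr' (heq.mono fun ς hh => hh.symm))
end

section
/- Let γ' ∈ (0,1] and γ ≥ 1, and suppose a < 0, b > 1 are reals satisfying γ'a + γb = γγ'. Then the functions x*(y) = (a/(a-γ))^{1/γ} · y^{γ'/γ} and y*(x) = (b/(b-γ'))^{1/γ'} · x^{γ/γ'} are reciprocal on (0,∞): x*(y*(x)) = x and y*(x*(y)) = y for all x, y > 0. -/
theorem power_boundaries_reciprocal (γ γ' a b : ℝ)
    (hγ' : γ' ∈ Set.Ioc (0 : ℝ) 1) (hγ : 1 ≤ γ) (ha : a < 0) (hb : 1 < b)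
    (hdual : γ' * a + γ * b = γ * γ') :
    letI xstar : ℝ → ℝ := fun y => (a / (a - γ)) ^ (1 / γ) * y ^ (γ' / γ)
    letI ystar : ℝ → ℝ := fun x => (b / (b - γ')) ^ (1 / γ') * x ^ (γ / γ')
    (∀ x : ℝ, 0 < x → xstar (ystar x) = x) ∧ (∀ y : ℝ, 0 < y → ystar (xstar y) = y) := by
  obtain ⟨hγ'0, hγ'1⟩ := hγ'
  have hγ0 : (0:ℝ) < γ := lt_of_lt_of_le one_pos hγ
  have hag : a - γ < 0 := by linarith
  have hbg : 0 < b - γ' := by linarith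
  have hc1 : 0 < a / (a - γ) := div_pos_of_neg_of_neg ha hag
  have hc2 : 0 < b / (b - γ') := div_pos (by linarith) hbg
  have hprod : (a / (a - γ)) * (b / (b - γ')) = 1 := by
    rw [div_mul_div_comm, div_eq_one_iff_eq (mul_ne_zero hag.ne hbg.ne')]
    nlinarith
  have key : ∀ c d p q : ℝ, 0 < c → 0 < d → 0 < p → 0 < q → c * d = 1 →
      ∀ x : ℝ, 0 < x →
        c ^ (1/p) * (d ^ (1/q) * x ^ (p/q)) ^ (q/p) = x := by
    intro c d p q hc hd hp hq hcd x hx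
    rw [Real.mul_rpow (by positivity) (by positivity),
      ← Real.rpow_mul hd.le, ← Real.rpow_mul hx.le]
    have h1 : 1/q * (q/p) = 1/p := by field_simp
    have h2 : p/q * (q/p) = 1 := by field_simp
    rw [h1, h2, Real.rpow_one, ← mul_assoc, ← Real.mul_rpow hc.le hd.le, hcd,
      Real.one_rpow, one_mul]
  constructor
  · intro x hx
    exact key _ _ _ _ hc1 hc2 hγ0 hγ'0 hprod x hx
  · intro y hy
    exact key _ _ _ _ hc2 hc1 hγ'0 hγ0 (by linarith [hprod, mul_comm (a/(a-γ)) (b/(b-γ'))]) y hy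
end

section
/- Let I : (0,1) → (0,∞) be continuously differentiable with I(x) < 1 for all x ∈ (0,1), and suppose I'(x) ≥ (1 - I(x))/x for all x ∈ (0,1). Then it cannot hold that I(1⁻) exists with I(1⁻) < 1; more precisely, if I extends continuously to (0,1] with I(1) < 1, then I(x) → -∞ as x → 0⁺, contradicting positivity. Hence any positive C¹ function I on (0,∞) satisfying I'(x) ≥ (1 - I(x))/x and I < 1 everywhere leads to a contradiction, i.e. no such function exists. -/
theorem no_subunit_solution (I I' : ℝ → ℝ)
    (hderiv : ∀ x : ℝ, 0 < x → HasDerivAt I (I' x) x)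
    (hcont : ContinuousOn I' (Set.Ioi 0))
    (hpos : ∀ x : ℝ, 0 < x → 0 < I x)
    (hlt : ∀ x : ℝ, 0 < x → I x < 1)
    (hineq : ∀ x : ℝ, 0 < x → (1 - I x) / x ≤ I' x) :
    False := by
  set c : ℝ := 1 - I 1 with hc
  have h1 : (0:ℝ) < 1 := one_pos
  have hcpos : 0 < c := by
    have := hlt 1 h1
    simp [hc]; linarith
  -- I is strictly monotone on (0, ∞)
  have hmono : StrictMonoOn I (Set.Ioi 0) := by
    apply strictMonoOn_of_deriv_pos (convex_Ioi 0)
    · intro x hx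
      exact (hderiv x hx).continuousAt.continuousWithinAt
    · intro x hx
      rw [interior_Ioi] at hx
      rw [(hderiv x hx).deriv]
      have := hineq x hx
      have h2 := hlt x hx
      have : 0 < (1 - I x) / x := div_pos (by linarith) hx
      linarith [hineq x hx]
  -- the comparison function g
  set g : ℝ → ℝ := fun x => I x - c * Real.log x with hg
  have hgd : ∀ x : ℝ, 0 < x → HasDerivAt g (I' x - c * x⁻¹) x := by
    intro x hx
    exact (hderiv x hx).sub ((Real.hasDerivAt_log hx.ne').const_mul c)
  have hgmono : MonotoneOn g (Set.Ioc 0 1) := by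
    apply monotoneOn_of_deriv_nonneg (convex_Ioc 0 1)
    · intro x hx
      exact (hgd x hx.1).continuousAt.continuousWithinAt
    · intro x hx
      rw [interior_Ioc] at hx
      exact (hgd x hx.1).differentiableAt.differentiableWithinAt
    · intro x hx
      rw [interior_Ioc] at hx
      obtain ⟨hx0, hx1⟩ := hx
      rw [(hgd x hx0).deriv]
      have hIle : I x ≤ I 1 := le_of_lt (hmono hx0 h1 hx1)
      have h3 : c * x⁻¹ = (1 - I 1) / x := by rw [hc, div_eq_mul_inv]
      have h4 : (1 - I 1) / x ≤ (1 - I x) / x :=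
        (div_le_div_iff_of_pos_right hx0).mpr (by linarith)
      linarith [hineq x hx0]
  -- choose a small point
  set a : ℝ := Real.exp (-(I 1 + 1) / c) with ha
  have hapos : 0 < a := Real.exp_pos _
  have hale : a ≤ 1 := by
    rw [ha]
    exact Real.exp_le_one_iff.mpr
      (div_nonpos_of_nonpos_of_nonneg (by linarith [hpos 1 h1]) hcpos.le)
  have hloga : Real.log a = -(I 1 + 1) / c := Real.log_exp _
  have hkey : g a ≤ g 1 := hgmono ⟨hapos, hale⟩ ⟨one_pos, le_refl 1⟩ hale
  have : I a - c * (-(I 1 + 1) / c) ≤ I 1 - c * Real.log 1 := by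
    rw [← hloga]; simpa [hg] using hkey
  rw [Real.log_one] at this
  have hca : c * (-(I 1 + 1) / c) = -(I 1 + 1) := by
    field_simp
  have : I a ≤ -1 := by
    rw [hca] at this; linarith
  linarith [hpos a hapos]
end
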